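/- Let b_1, …, b_d be a palindromic sequence (with respect to k and ℓ) of integers in {0,…,k^ℓ−1}. Then b_1 > b_2 > ⋯ > b_d if and only if R′_k(ℓ)(b_1) < R′_k(ℓ)(b_2) < ⋯ < R′_k(ℓ)(b_d) (i.e., the values b_1,…,b_d occur in this order as a subsequence of the digit-reversal permutation R′_k(ℓ) read left to right). -/
import Mathlib


/-- `digitRev k ℓ n` : the radix-`k` digit reversal of `n`, viewed as a string of exactly
`ℓ` base-`k` digits (padded with leading zeros). -/
def digitRev (k : ℕ) : ℕ → ℕ → ℕ
  | 0, _ => 0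
  | ℓ + 1, n => n % k * k ^ ℓ + digitRev k ℓ (n / k)

/-- A sequence of numbers in `{0,…,k^ℓ-1}` is palindromic (w.r.t. `k`, `ℓ`) if the
`ℓ`-digit base-`k` string of the `i`-th term from the start is the reversal of that
of the `i`-th term from the end. -/
def Palindromic (k ℓ d : ℕ) (b : Fin d → ℕ) : Prop :=
  ∀ i : Fin d, digitRev k ℓ (b i) = b i.rev

/-- A palindromic sequence of numbers in `{0,…,k^ℓ-1}` is strictly decreasing if and only
if its digit reversals are strictly increasing, i.e. its values occur in this order as a
subsequence of the digit-reversal permutation `R'_k(ℓ)` read left to right. -/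
theorem stmt9 (k ℓ d : ℕ) (hk : 2 ≤ k) (hℓ : 1 ≤ ℓ)
    (b : Fin d → ℕ) (hb : ∀ i, b i < k ^ ℓ) (hpal : Palindromic k ℓ d b) :
    StrictAnti b ↔ StrictMono (fun i => digitRev k ℓ (b i)) := by
  simp only [Palindromic] at hpal
  constructor
  · intro h i j hij
    simp only [hpal]
    exact h (Fin.rev_lt_rev.mpr hij)
  · intro h i j hij
    have := h (Fin.rev_lt_rev.mpr hij)
    simpa [hpal, Fin.rev_rev] using this
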